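/- arXiv:1312.2483 — 4 statements merged into one kernel-verified Lean document; each statement's English description precedes it below -/
import Mathlib

section
/- Let H be a family of 3-wise independent hash functions from {0,1}^n to {0,1}^m, let B ⊆ {0,1}^n with |B| > 0, and let x ∈ {0,1}^n with x ∉ B. Then for every γ > 0, conditioned on h(x) = 0^m, the probability over uniform h ∈ H that |{y ∈ B : h(y) = 0^m}| is not in [(1−γ)|B|/2^m, (1+γ)|B|/2^m] is at most 2^m/(γ²|B|). -/
set_option maxHeartbeats 1000000 in
open Classical in
theorem stmt_3 {n m : ℕ} {H : Type*} [Fintype H] [Nonempty H]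
    (F : H → (Fin n → Bool) → (Fin m → Bool))
    (huniform : ∀ x y, ((Finset.univ.filter (fun h => F h x = y)).card : ℝ)
        = (Fintype.card H : ℝ) / 2 ^ m)
    (hpair : ∀ x₁ x₂, x₁ ≠ x₂ → ∀ y₁ y₂,
        ((Finset.univ.filter (fun h => F h x₁ = y₁ ∧ F h x₂ = y₂)).card : ℝ)
        = (Fintype.card H : ℝ) / 2 ^ (2*m))
    (htriple : ∀ x₁ x₂ x₃, x₁ ≠ x₂ → x₁ ≠ x₃ → x₂ ≠ x₃ → ∀ y₁ y₂ y₃,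
        ((Finset.univ.filter (fun h => F h x₁ = y₁ ∧ F h x₂ = y₂ ∧ F h x₃ = y₃)).card : ℝ)
        = (Fintype.card H : ℝ) / 2 ^ (3*m))
    (B : Finset (Fin n → Bool)) (hB : B.Nonempty)
    (x : Fin n → Bool) (hx : x ∉ B) (γ : ℝ) (hγ : 0 < γ) :
    ((Finset.univ.filter (fun h : H => F h x = (fun _ => false) ∧
        ¬((1-γ) * (B.card : ℝ) / 2 ^ m ≤ ((B.filter (fun y => F h y = fun _ => false)).card : ℝ)
          ∧ ((B.filter (fun y => F h y = fun _ => false)).card : ℝ) ≤ (1+γ) * (B.card : ℝ) / 2 ^ m))).card : ℝ)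
        / ((Finset.univ.filter (fun h : H => F h x = fun _ => false)).card : ℝ)
      ≤ 2 ^ m / (γ ^ 2 * (B.card : ℝ)) := by
  classical
  have hNpos : (0:ℝ) < (Fintype.card H : ℝ) := by exact_mod_cast Fintype.card_pos
  have hMpos : (0:ℝ) < (2:ℝ)^m := by positivity
  have hKpos : (0:ℝ) < (B.card : ℝ) := by exact_mod_cast (Finset.card_pos.mpr hB)
  set N : ℝ := (Fintype.card H : ℝ) with hNdef
  set K : ℝ := (B.card : ℝ) with hKdef
  set c0 : Fin m → Bool := (fun _ => false) with hc0
  set G : Finset H := Finset.univ.filter (fun h => F h x = c0) with hGdef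
  have hGcard : (G.card : ℝ) = N / 2^m := huniform x c0
  set Z : H → ℝ := fun h => ((B.filter (fun y => F h y = c0)).card : ℝ) with hZdef
  have hne : ∀ y ∈ B, x ≠ y := fun y hy hxy => hx (hxy ▸ hy)
  have hind : ∀ h, Z h = ∑ y ∈ B, (if F h y = c0 then (1:ℝ) else 0) := by
    intro h
    rw [hZdef]
    simp [Finset.sum_boole]
  have hS1 : ∑ h ∈ G, Z h = K * (N / 2^(2*m)) := by
    calc ∑ h ∈ G, Z h = ∑ h ∈ G, ∑ y ∈ B, (if F h y = c0 then (1:ℝ) else 0) :=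
          Finset.sum_congr rfl (fun h _ => hind h)
      _ = ∑ y ∈ B, ∑ h ∈ G, (if F h y = c0 then (1:ℝ) else 0) := Finset.sum_comm
      _ = ∑ y ∈ B, (N / 2^(2*m)) := by
          refine Finset.sum_congr rfl (fun y hy => ?_)
          rw [Finset.sum_boole, hGdef, Finset.filter_filter]
          exact hpair x y (hne y hy) c0 c0
      _ = K * (N / 2^(2*m)) := by
          rw [Finset.sum_const, nsmul_eq_mul, ← hKdef]
  have hsq : ∀ (p q : Prop) [Decidable p] [Decidable q],
      (if p then (1:ℝ) else 0) * (if q then 1 else 0) = if p ∧ q then 1 else 0 := by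
    intro p q _ _
    by_cases hp : p <;> by_cases hq : q <;> simp [hp, hq]
  have hS2 : ∑ h ∈ G, (Z h)^2
      = K * (N / 2^(2*m)) + (K^2 - K) * (N / 2^(3*m)) := by
    have h1 : ∀ h, (Z h)^2 = ∑ y ∈ B, ∑ z ∈ B,
        (if F h y = c0 ∧ F h z = c0 then (1:ℝ) else 0) := by
      intro h
      rw [hind h, sq, Finset.sum_mul_sum]
      exact Finset.sum_congr rfl fun y _ => Finset.sum_congr rfl fun z _ => hsq _ _
    calc ∑ h ∈ G, (Z h)^2
        = ∑ y ∈ B, ∑ z ∈ B, ∑ h ∈ G, (if F h y = c0 ∧ F h z = c0 then (1:ℝ) else 0) := by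
          rw [Finset.sum_congr rfl fun h _ => h1 h, Finset.sum_comm]
          exact Finset.sum_congr rfl fun y _ => Finset.sum_comm
      _ = ∑ y ∈ B, ∑ z ∈ B, (if y = z then N / 2^(2*m) else N / 2^(3*m)) := by
          refine Finset.sum_congr rfl fun y hy => Finset.sum_congr rfl fun z hz => ?_
          rw [Finset.sum_boole, hGdef, Finset.filter_filter]
          by_cases hyz : y = z
          · subst hyz
            rw [if_pos rfl]
            have heq : (Finset.univ.filter (fun h => F h x = c0 ∧ F h y = c0 ∧ F h y = c0))
                = (Finset.univ.filter (fun h => F h x = c0 ∧ F h y = c0)) := by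
              apply Finset.filter_congr
              intro h _
              tauto
            rw [heq]
            exact hpair x y (hne y hy) c0 c0
          · rw [if_neg hyz]
            exact htriple x y z (hne y hy) (hne z hz) hyz c0 c0 c0
      _ = ∑ y ∈ B, ((N/2^(2*m)) + (K - 1) * (N/2^(3*m))) := by
          refine Finset.sum_congr rfl fun y hy => ?_
          have hsplit : ∀ z, (if y = z then N/2^(2*m) else N/2^(3*m))
              = N/2^(3*m) + (if y = z then N/2^(2*m) - N/2^(3*m) else 0) := by
            intro z
            by_cases h : y = z <;> simp [h]
          rw [Finset.sum_congr rfl fun z _ => hsplit z, Finset.sum_add_distrib,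
              Finset.sum_const, Finset.sum_ite_eq, if_pos hy, nsmul_eq_mul, ← hKdef]
          ring
      _ = K * (N / 2^(2*m)) + (K^2 - K) * (N / 2^(3*m)) := by
          rw [Finset.sum_const, nsmul_eq_mul, ← hKdef]
          ring
  set μ : ℝ := K / 2^m with hμdef
  have hμpos : 0 < μ := by rw [hμdef]; positivity
  have hpow2 : (2:ℝ)^(2*m) = (2^m)^2 := by rw [mul_comm, pow_mul]
  have hpow3 : (2:ℝ)^(3*m) = (2^m)^3 := by rw [mul_comm, pow_mul]
  have hVeq : ∑ h ∈ G, (Z h - μ)^2 = K*N/(2^m)^2 - K*N/(2^m)^3 := by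
    have expand : ∀ h ∈ G, (Z h - μ)^2 = (Z h)^2 - 2*μ*(Z h) + μ^2 := fun h _ => by ring
    rw [Finset.sum_congr rfl expand, Finset.sum_add_distrib, Finset.sum_sub_distrib,
        ← Finset.mul_sum, hS1, hS2, Finset.sum_const, nsmul_eq_mul, hGcard, hμdef,
        hpow2, hpow3]
    field_simp
    ring
  set D : Finset H := G.filter
      (fun h => ¬((1-γ)*K/2^m ≤ Z h ∧ Z h ≤ (1+γ)*K/2^m)) with hDdef
  have hDbound : ∀ h ∈ D, γ^2 * μ^2 ≤ (Z h - μ)^2 := by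
    intro h hh
    rw [hDdef, Finset.mem_filter] at hh
    obtain ⟨_, hbad⟩ := hh
    have ha : (1-γ)*K/2^m = μ - γ*μ := by rw [hμdef]; ring
    have hb : (1+γ)*K/2^m = μ + γ*μ := by rw [hμdef]; ring
    rcases not_and_or.mp hbad with h1 | h1
    · push_neg at h1
      rw [ha] at h1
      have h2 : γ*μ ≤ μ - Z h := by linarith
      have h3 := mul_self_le_mul_self (le_of_lt (mul_pos hγ hμpos)) h2
      calc γ^2*μ^2 = γ*μ*(γ*μ) := by ring
        _ ≤ (μ - Z h)*(μ - Z h) := h3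
        _ = (Z h - μ)^2 := by ring
    · push_neg at h1
      rw [hb] at h1
      have h2 : γ*μ ≤ Z h - μ := by linarith
      have h3 := mul_self_le_mul_self (le_of_lt (mul_pos hγ hμpos)) h2
      calc γ^2*μ^2 = γ*μ*(γ*μ) := by ring
        _ ≤ (Z h - μ)*(Z h - μ) := h3
        _ = (Z h - μ)^2 := by ring
  have hDcard : (D.card : ℝ) * (γ^2 * μ^2) ≤ ∑ h ∈ G, (Z h - μ)^2 := by
    calc (D.card : ℝ) * (γ^2*μ^2) = ∑ _h ∈ D, γ^2*μ^2 := by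
          rw [Finset.sum_const, nsmul_eq_mul]
      _ ≤ ∑ h ∈ D, (Z h - μ)^2 := Finset.sum_le_sum hDbound
      _ ≤ ∑ h ∈ G, (Z h - μ)^2 :=
          Finset.sum_le_sum_of_subset_of_nonneg (Finset.filter_subset _ _)
            (fun h _ _ => sq_nonneg _)
  have h3 : (D.card:ℝ) * (γ^2 * μ^2) ≤ K*N/(2^m)^2 := by
    rw [hVeq] at hDcard
    have : (0:ℝ) < K*N/(2^m)^3 := by positivity
    linarith
  have h4 : (D.card:ℝ) * (γ^2*K) ≤ N := by
    rw [hμdef] at h3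
    have hDnn : (0:ℝ) ≤ (D.card:ℝ) := Nat.cast_nonneg _
    have h3' : (D.card:ℝ) * (γ^2 * K^2) ≤ K*N := by
      have hM2 : (0:ℝ) < ((2:ℝ)^m)^2 := by positivity
      have := mul_le_mul_of_nonneg_right h3 (le_of_lt hM2)
      calc (D.card:ℝ) * (γ^2 * K^2)
          = (D.card:ℝ) * (γ^2 * (K/2^m)^2) * ((2:ℝ)^m)^2 := by
            field_simp
          _ ≤ K*N/(2^m)^2 * ((2:ℝ)^m)^2 := this
          _ = K*N := by field_simp
    have h3'' : (D.card:ℝ) * (γ^2*K) * K ≤ N * K := by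
      calc (D.card:ℝ)*(γ^2*K)*K = (D.card:ℝ)*(γ^2*K^2) := by ring
        _ ≤ K*N := h3'
        _ = N*K := by ring
    exact le_of_mul_le_mul_right h3'' hKpos
  have hsets : (Finset.univ.filter (fun h : H => F h x = c0 ∧
      ¬((1-γ) * K / 2 ^ m ≤ ((B.filter (fun y => F h y = c0)).card : ℝ) ∧
        ((B.filter (fun y => F h y = c0)).card : ℝ) ≤ (1+γ) * K / 2 ^ m))) = D := by
    ext h
    simp only [hDdef, hGdef, hZdef, Finset.mem_filter, Finset.mem_univ, true_and]
  rw [hsets, hGcard, div_le_div_iff₀ (by positivity) (by positivity)]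
  calc (D.card:ℝ) * (γ^2 * K) ≤ N := h4
    _ = 2^m * (N / 2^m) := by field_simp
end

section
/- Let H be a family of 3-wise independent hash functions from {0,1}^n to {0,1}^m, let B ⊆ {0,1}^n with |B| > 1, and let x ∈ B. Then for every γ > 0, conditioned on h(x) = 0^m, the probability over uniform h ∈ H that |{y ∈ B : h(y) = 0^m}| is not in [1 + (1−γ)(|B|−1)/2^m, 1 + (1+γ)(|B|−1)/2^m] is at most 2^m/(γ²(|B|−1)). -/
open Classical in
set_option maxHeartbeats 2000000 in
theorem stmt_4 {n m : ℕ} {H : Type*} [Fintype H] [Nonempty H]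
    (F : H → (Fin n → Bool) → (Fin m → Bool))
    (huniform : ∀ x y, ((Finset.univ.filter (fun h => F h x = y)).card : ℝ)
        = (Fintype.card H : ℝ) / 2 ^ m)
    (hpair : ∀ x₁ x₂, x₁ ≠ x₂ → ∀ y₁ y₂,
        ((Finset.univ.filter (fun h => F h x₁ = y₁ ∧ F h x₂ = y₂)).card : ℝ)
        = (Fintype.card H : ℝ) / 2 ^ (2*m))
    (htriple : ∀ x₁ x₂ x₃, x₁ ≠ x₂ → x₁ ≠ x₃ → x₂ ≠ x₃ → ∀ y₁ y₂ y₃,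
        ((Finset.univ.filter (fun h => F h x₁ = y₁ ∧ F h x₂ = y₂ ∧ F h x₃ = y₃)).card : ℝ)
        = (Fintype.card H : ℝ) / 2 ^ (3*m))
    (B : Finset (Fin n → Bool)) (hB : 1 < B.card)
    (x : Fin n → Bool) (hx : x ∈ B) (γ : ℝ) (hγ : 0 < γ) :
    ((Finset.univ.filter (fun h : H => F h x = (fun _ => false) ∧
        ¬(1 + (1-γ) * ((B.card : ℝ) - 1) / 2 ^ m ≤ ((B.filter (fun y => F h y = fun _ => false)).card : ℝ)
          ∧ ((B.filter (fun y => F h y = fun _ => false)).card : ℝ)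
              ≤ 1 + (1+γ) * ((B.card : ℝ) - 1) / 2 ^ m))).card : ℝ)
        / ((Finset.univ.filter (fun h : H => F h x = fun _ => false)).card : ℝ)
      ≤ 2 ^ m / (γ ^ 2 * ((B.card : ℝ) - 1)) := by
  classical
  set z0 : Fin m → Bool := fun _ => false with hz0
  set N : ℝ := (B.card : ℝ) - 1 with hNdef
  have hN1 : (1:ℝ) ≤ N := by
    have h2 : (2:ℝ) ≤ (B.card : ℝ) := by exact_mod_cast hB
    rw [hNdef]; linarith
  have hNpos : (0:ℝ) < N := by linarith
  have hm : (0:ℝ) < 2 ^ m := by positivity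
  have hHpos : (0:ℝ) < (Fintype.card H : ℝ) := by
    exact_mod_cast Fintype.card_pos (α := H)
  set c2 : ℝ := (Fintype.card H : ℝ) / 2 ^ (2*m) with hc2
  set c3 : ℝ := (Fintype.card H : ℝ) / 2 ^ (3*m) with hc3
  set μ : ℝ := N / 2 ^ m with hμ
  have hμpos : 0 < μ := by rw [hμ]; positivity
  set G : Finset H := Finset.univ.filter (fun h : H => F h x = z0) with hGdef
  set B' : Finset (Fin n → Bool) := B.erase x with hB'
  have hcardB' : (B'.card : ℝ) = N := by
    rw [hB', Finset.card_erase_of_mem hx, hNdef]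
    have h1 : 1 ≤ B.card := le_of_lt hB
    push_cast [h1]
    ring
  set S : H → ℝ := fun h => ((B'.filter (fun y => F h y = z0)).card : ℝ) with hSdef
  have hSsum : ∀ h, S h = ∑ y ∈ B', (if F h y = z0 then (1:ℝ) else 0) := by
    intro h; rw [Finset.sum_boole]
  have hGcard : (G.card : ℝ) = (Fintype.card H : ℝ) / 2 ^ m := huniform x z0
  have hGpos : (0:ℝ) < (G.card : ℝ) := by rw [hGcard]; positivity
  have hne : ∀ y ∈ B', x ≠ y := fun y hy => (Finset.ne_of_mem_erase hy).symm
  have lemA : ∀ y ∈ B', ((G.filter (fun h => F h y = z0)).card : ℝ) = c2 := by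
    intro y hy
    rw [hGdef, Finset.filter_filter]
    exact hpair x y (hne y hy) z0 z0
  have lemB : ∀ y ∈ B', ∀ z ∈ B', y ≠ z →
      ((G.filter (fun h => F h y = z0 ∧ F h z = z0)).card : ℝ) = c3 := by
    intro y hy z hz hyz
    rw [hGdef, Finset.filter_filter]
    exact htriple x y z (hne y hy) (hne z hz) hyz z0 z0 z0
  have hsum1 : ∑ h ∈ G, S h = N * c2 := by
    calc ∑ h ∈ G, S h = ∑ h ∈ G, ∑ y ∈ B', (if F h y = z0 then (1:ℝ) else 0) := by
          exact Finset.sum_congr rfl fun h _ => hSsum h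
      _ = ∑ y ∈ B', ∑ h ∈ G, (if F h y = z0 then (1:ℝ) else 0) := Finset.sum_comm
      _ = ∑ y ∈ B', c2 := by
          refine Finset.sum_congr rfl fun y hy => ?_
          rw [Finset.sum_boole]
          exact lemA y hy
      _ = N * c2 := by rw [Finset.sum_const, nsmul_eq_mul, hcardB']
  have hsum2 : ∑ h ∈ G, (S h)^2 = N * c2 + N * (N - 1) * c3 := by
    have hsq : ∀ h, (S h)^2
        = ∑ y ∈ B', ∑ z ∈ B', (if F h y = z0 ∧ F h z = z0 then (1:ℝ) else 0) := by
      intro h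
      rw [hSsum, sq, Finset.sum_mul_sum]
      refine Finset.sum_congr rfl fun y _ => Finset.sum_congr rfl fun z _ => ?_
      by_cases h1 : F h y = z0 <;> by_cases h2 : F h z = z0 <;> simp [h1, h2]
    calc ∑ h ∈ G, (S h)^2
        = ∑ h ∈ G, ∑ y ∈ B', ∑ z ∈ B', (if F h y = z0 ∧ F h z = z0 then (1:ℝ) else 0) :=
          Finset.sum_congr rfl fun h _ => hsq h
      _ = ∑ y ∈ B', ∑ z ∈ B', ∑ h ∈ G, (if F h y = z0 ∧ F h z = z0 then (1:ℝ) else 0) := by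
          rw [Finset.sum_comm]
          exact Finset.sum_congr rfl fun y _ => Finset.sum_comm
      _ = ∑ y ∈ B', ∑ z ∈ B', ((G.filter (fun h => F h y = z0 ∧ F h z = z0)).card : ℝ) := by
          exact Finset.sum_congr rfl fun y _ => Finset.sum_congr rfl fun z _ => Finset.sum_boole ..
      _ = ∑ y ∈ B', (c2 + (N - 1) * c3) := by
          refine Finset.sum_congr rfl fun y hy => ?_
          rw [← Finset.add_sum_erase _ _ hy]
          have hd : ((G.filter (fun h => F h y = z0 ∧ F h y = z0)).card : ℝ) = c2 := by
            simp only [and_self]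
            exact lemA y hy
          have hoff : ∑ z ∈ B'.erase y, ((G.filter (fun h => F h y = z0 ∧ F h z = z0)).card : ℝ)
              = (N - 1) * c3 := by
            have : ∀ z ∈ B'.erase y,
                ((G.filter (fun h => F h y = z0 ∧ F h z = z0)).card : ℝ) = c3 := by
              intro z hz
              exact lemB y hy z (Finset.mem_of_mem_erase hz)
                (Ne.symm (Finset.ne_of_mem_erase hz))
            rw [Finset.sum_congr rfl this, Finset.sum_const, nsmul_eq_mul,
              Finset.card_erase_of_mem hy]
            have h1 : 1 ≤ B'.card := by
              by_contra hcon
              push_neg at hcon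
              interval_cases h : B'.card
              · simp [h] at hcardB'; linarith
            push_cast [h1]
            rw [hcardB']
          rw [hd, hoff]
      _ = N * (c2 + (N-1)*c3) := by rw [Finset.sum_const, nsmul_eq_mul, hcardB']
      _ = N * c2 + N * (N - 1) * c3 := by ring
  -- expansion of 2^(2m), 2^(3m)
  have h2m : (2:ℝ) ^ (2*m) = (2^m) * (2^m) := by rw [two_mul, pow_add]
  have h3m : (2:ℝ) ^ (3*m) = (2^m) * ((2^m) * (2^m)) := by
    rw [show 3*m = m + (m + m) by ring, pow_add, pow_add]
  have hvar : ∑ h ∈ G, (S h - μ)^2 = N * c2 - N * c3 := by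
    calc ∑ h ∈ G, (S h - μ)^2
        = ∑ h ∈ G, ((S h)^2 - 2*μ*S h + μ^2) :=
          Finset.sum_congr rfl fun h _ => by ring
      _ = (∑ h ∈ G, (S h)^2) - 2*μ*(∑ h ∈ G, S h) + μ^2 * G.card := by
          rw [Finset.sum_add_distrib, Finset.sum_sub_distrib, Finset.sum_const,
            ← Finset.mul_sum, nsmul_eq_mul]
          ring
      _ = N * c2 - N * c3 := by
          rw [hsum1, hsum2, hGcard, hc2, hc3, hμ, h2m, h3m]
          field_simp
          ring
  -- on G, the count over B equals S h + 1
  have hZ : ∀ h ∈ G, ((B.filter (fun y => F h y = z0)).card : ℝ) = S h + 1 := by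
    intro h hh
    have hhx : F h x = z0 := (Finset.mem_filter.mp hh).2
    have heq : B.filter (fun y => F h y = z0)
        = insert x (B'.filter (fun y => F h y = z0)) := by
      conv_lhs => rw [← Finset.insert_erase hx]
      rw [Finset.filter_insert, if_pos hhx, hB']
    rw [heq, Finset.card_insert_of_notMem (by simp [hB'])]
    push_cast
    rw [hSdef]
  -- the bad set
  have hnum : Finset.univ.filter (fun h : H => F h x = z0 ∧
        ¬(1 + (1-γ) * N / 2 ^ m ≤ ((B.filter (fun y => F h y = z0)).card : ℝ)
          ∧ ((B.filter (fun y => F h y = z0)).card : ℝ) ≤ 1 + (1+γ) * N / 2 ^ m))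
      = G.filter (fun h : H =>
        ¬(1 + (1-γ) * N / 2 ^ m ≤ ((B.filter (fun y => F h y = z0)).card : ℝ)
          ∧ ((B.filter (fun y => F h y = z0)).card : ℝ) ≤ 1 + (1+γ) * N / 2 ^ m)) := by
    rw [hGdef, Finset.filter_filter]
  set Bad : Finset H := G.filter (fun h : H =>
        ¬(1 + (1-γ) * N / 2 ^ m ≤ ((B.filter (fun y => F h y = z0)).card : ℝ)
          ∧ ((B.filter (fun y => F h y = z0)).card : ℝ) ≤ 1 + (1+γ) * N / 2 ^ m)) with hBad
  have hpoint : ∀ h ∈ Bad, γ^2 * μ^2 ≤ (S h - μ)^2 := by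
    intro h hh
    rw [hBad, Finset.mem_filter] at hh
    obtain ⟨hhG, hhbad⟩ := hh
    rw [hZ h hhG] at hhbad
    push_neg at hhbad
    have e1 : (1-γ) * N / 2 ^ m = μ - γ*μ := by rw [hμ]; ring
    have e2 : (1+γ) * N / 2 ^ m = μ + γ*μ := by rw [hμ]; ring
    rw [e1, e2] at hhbad
    by_cases hc : 1 + (μ - γ*μ) ≤ S h + 1
    · have h2 := hhbad hc
      nlinarith [mul_pos hγ hμpos]
    · push_neg at hc
      nlinarith [mul_pos hγ hμpos]
  have hcheb : (Bad.card : ℝ) * (γ^2 * μ^2) ≤ N * c2 := by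
    calc (Bad.card : ℝ) * (γ^2 * μ^2) = ∑ _h ∈ Bad, (γ^2 * μ^2) := by
          rw [Finset.sum_const, nsmul_eq_mul]
      _ ≤ ∑ h ∈ Bad, (S h - μ)^2 := Finset.sum_le_sum hpoint
      _ ≤ ∑ h ∈ G, (S h - μ)^2 := by
          refine Finset.sum_le_sum_of_subset_of_nonneg ?_ (fun h _ _ => sq_nonneg _)
          rw [hBad]; exact Finset.filter_subset _ _
      _ = N * c2 - N * c3 := hvar
      _ ≤ N * c2 := by
          have hc3pos : 0 ≤ N * c3 := by rw [hc3]; positivity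
          linarith
  -- finish
  rw [hnum, hGcard]
  rw [div_le_div_iff₀ (by positivity) (by positivity)]
  have hBadnn : (0:ℝ) ≤ (Bad.card : ℝ) := Nat.cast_nonneg _
  rw [hμ, hc2, h2m] at hcheb
  have key : (Bad.card : ℝ) * (γ^2 * N) ≤ (Fintype.card H : ℝ) := by
    have h1 : (Bad.card : ℝ) * (γ^2 * N) * (N / (2^m * 2^m))
        ≤ (Fintype.card H : ℝ) * (N / (2^m * 2^m)) := by
      calc (Bad.card : ℝ) * (γ^2 * N) * (N / (2^m * 2^m))
          = (Bad.card : ℝ) * (γ^2 * (N / 2^m)^2) := by ring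
        _ ≤ N * ((Fintype.card H : ℝ) / (2^m * 2^m)) := hcheb
        _ = (Fintype.card H : ℝ) * (N / (2^m * 2^m)) := by ring
    have hpos : (0:ℝ) < N / (2^m * 2^m) := by positivity
    exact le_of_mul_le_mul_right h1 hpos
  calc (Bad.card : ℝ) * (γ^2 * N) ≤ (Fintype.card H : ℝ) := key
    _ = 2^m * ((Fintype.card H : ℝ) / 2^m) := by
        rw [mul_comm, div_mul_cancel₀ _ (ne_of_gt hm)]
end

section
/- There exists a sub-probability distribution Q on pairs (x,p) satisfying Σ_p Q(x,p)/p ≤ 1 for every x, which is not realizable as a convex combination of honest provers. Concretely: let 𝒳 = {x₁, x₂} and define Q(x₁, 1/2) = 1/4, Q(x₁, 1/4) = 1/8, Q(x₂, 3/4) = 1/2, Q(x₂, 3/8) = 1/8, and Q = 0 elsewhere. Then Q is a probability distribution, Σ_p Q(x,p)/p = 1 for both x ∈ 𝒳, yet there is no finite family of probability distributions {P_i} on 𝒳 with weights q_i ≥ 0, Σ q_i ≤ 1, such that Q(x,p) = Σ_{i : P_i(x) = p} q_i P_i(x) for all (x,p). -/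
/-! A prover with `P(x₁) = 1/2` necessarily has `P(x₂) = 1/2`, so every convex combination of
honest provers puts the same mass on `(x₁, 1/2)` and on `(x₂, 1/2)`. The given `Q` puts `1/4` on
the first and `0` on the second. -/

open Classical in
theorem Finset.sum_filter_eq_half_comm {ι : Type*} (s : Finset ι) (q : ι → ℝ)
    (P : ι → Fin 2 → ℝ) (hP : ∀ i, P i 0 + P i 1 = 1) :
    ∑ i ∈ s.filter (fun i => P i 0 = 1/2), q i * P i 0
      = ∑ i ∈ s.filter (fun i => P i 1 = 1/2), q i * P i 1 := by
  have half_iff : ∀ i, P i 0 = 1/2 ↔ P i 1 = 1/2 := fun i => by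
    constructor <;> intro h <;> linarith [hP i]
  rw [Finset.filter_congr fun i _ => half_iff i]
  refine Finset.sum_congr rfl fun i hi => ?_
  rw [(Finset.mem_filter.mp hi).2, (half_iff i).mpr (Finset.mem_filter.mp hi).2]

open Classical in
theorem stmt_7 (Q : Fin 2 → ℝ → ℝ)
    (h1 : Q 0 (1/2) = 1/4) (h2 : Q 0 (1/4) = 1/8)
    (h3 : Q 1 (3/4) = 1/2) (h4 : Q 1 (3/8) = 1/8)
    (h0 : ∀ x p, ¬((x = 0 ∧ p = 1/2) ∨ (x = 0 ∧ p = 1/4)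
        ∨ (x = 1 ∧ p = 3/4) ∨ (x = 1 ∧ p = 3/8)) → Q x p = 0) :
    (Q 0 (1/2) + Q 0 (1/4) + Q 1 (3/4) + Q 1 (3/8) = 1)
    ∧ (Q 0 (1/2) / (1/2) + Q 0 (1/4) / (1/4) = 1)
    ∧ (Q 1 (3/4) / (3/4) + Q 1 (3/8) / (3/8) = 1)
    ∧ ¬ ∃ (k : ℕ) (q : Fin k → ℝ) (P : Fin k → Fin 2 → ℝ),
        (∀ i, 0 ≤ q i) ∧ (∑ i, q i) ≤ 1
        ∧ (∀ i x, 0 ≤ P i x) ∧ (∀ i, P i 0 + P i 1 = 1)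
        ∧ (∀ x p, 0 < p → p ≤ 1 →
            Q x p = ∑ i ∈ Finset.univ.filter (fun i => P i x = p), q i * P i x) := by
  refine ⟨by rw [h1, h2, h3, h4]; norm_num, by rw [h1, h2]; norm_num,
    by rw [h3, h4]; norm_num, ?_⟩
  rintro ⟨k, q, P, -, -, -, hP, hQ⟩
  have hx₁ := hQ 0 (1/2) (by norm_num) (by norm_num)
  have hx₂ := hQ 1 (1/2) (by norm_num) (by norm_num)
  have hQx₂ : Q 1 (1/2) = 0 := h0 1 (1/2) (by norm_num)
  rw [h1, Finset.sum_filter_eq_half_comm _ _ _ hP, ← hx₂, hQx₂] at hx₁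
  norm_num at hx₁
end

section
/- Let P be a probability distribution on {0,1}^n, ε ∈ (0,1), t = ⌈2n/ε⌉, buckets B_i and weights h_i as in the histogram definition, and let N = {i ∈ {0,...,t} : h_i ≥ ε/(2t)}. Then P(∪_{i ∈ N} B_i) ≥ 1 − 2^{-n} − ε, and in particular ≥ 1 − 2ε when ε ≥ 2^{-n}. -/
open Classical in
theorem stmt_12 (n : ℕ) (hn : 0 < n) (P : (Fin n → Bool) → ℝ)
    (hP0 : ∀ x, 0 ≤ P x) (hP1 : ∑ x, P x = 1)
    (ε : ℝ) (hε : 0 < ε) (hε1 : ε < 1) (t : ℕ) (ht : t = ⌈2*(n:ℝ)/ε⌉₊)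
    (h : ℕ → ℝ)
    (hh : ∀ i, h i = ∑ x ∈ Finset.univ.filter
        (fun x => (2:ℝ) ^ (-((i:ℝ)+1)*ε) < P x ∧ P x ≤ (2:ℝ) ^ (-(i:ℝ)*ε)), P x)
    (N : Finset ℕ) (hN : N = (Finset.range (t+1)).filter (fun i => ε/(2*(t:ℝ)) ≤ h i)) :
    1 - (2:ℝ) ^ (-(n:ℝ)) - ε ≤
      ∑ x ∈ Finset.univ.filter (fun x => ∃ i ∈ N,
          (2:ℝ) ^ (-((i:ℝ)+1)*ε) < P x ∧ P x ≤ (2:ℝ) ^ (-(i:ℝ)*ε)), P x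
    ∧ ((2:ℝ) ^ (-(n:ℝ)) ≤ ε →
      1 - 2*ε ≤ ∑ x ∈ Finset.univ.filter (fun x => ∃ i ∈ N,
          (2:ℝ) ^ (-((i:ℝ)+1)*ε) < P x ∧ P x ≤ (2:ℝ) ^ (-(i:ℝ)*ε)), P x) := by
  -- notation
  set cond : ℕ → (Fin n → Bool) → Prop :=
    fun i x => (2:ℝ) ^ (-((i:ℝ)+1)*ε) < P x ∧ P x ≤ (2:ℝ) ^ (-(i:ℝ)*ε) with hcond
  -- buckets are pairwise disjoint
  have hdisj : ∀ i j : ℕ, i ≠ j →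
      Disjoint (Finset.univ.filter (cond i)) (Finset.univ.filter (cond j)) := by
    have key : ∀ i j : ℕ, i < j →
        Disjoint (Finset.univ.filter (cond i)) (Finset.univ.filter (cond j)) := by
      intro i j hij
      rw [Finset.disjoint_left]
      intro x hxi hxj
      simp only [Finset.mem_filter, hcond] at hxi hxj
      have h1 : ((j:ℝ)) ≥ (i:ℝ)+1 := by exact_mod_cast hij
      have : (2:ℝ) ^ (-(j:ℝ)*ε) ≤ (2:ℝ) ^ (-((i:ℝ)+1)*ε) := by
        apply Real.rpow_le_rpow_of_exponent_le (by norm_num)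
        nlinarith
      linarith [hxi.2.1, hxj.2.2]
    intro i j hij
    rcases lt_or_gt_of_ne hij with hlt | hgt
    · exact key i j hlt
    · exact (key j i hgt).symm
  -- sum over a union of buckets equals sum of h i
  have hsum : ∀ S : Finset ℕ,
      ∑ x ∈ Finset.univ.filter (fun x => ∃ i ∈ S, cond i x), P x = ∑ i ∈ S, h i := by
    intro S
    have hset : Finset.univ.filter (fun x => ∃ i ∈ S, cond i x)
        = S.biUnion (fun i => Finset.univ.filter (cond i)) := by
      ext x
      simp [Finset.mem_biUnion]
    rw [hset, Finset.sum_biUnion]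
    · exact Finset.sum_congr rfl (fun i _ => (hh i).symm)
    · intro i _ j _ hij
      exact hdisj i j hij
  have hhnn : ∀ i, 0 ≤ h i := by
    intro i
    rw [hh i]
    exact Finset.sum_nonneg (fun x _ => hP0 x)
  have ht1 : 1 ≤ t := by
    rw [ht, Nat.one_le_ceil_iff]
    positivity
  have htε : 2*(n:ℝ) ≤ t*ε := by
    have := Nat.le_ceil (2*(n:ℝ)/ε)
    rw [← ht] at this
    rw [div_le_iff₀ hε] at this
    linarith
  have hPle1 : ∀ x, P x ≤ 1 := by
    intro x
    rw [← hP1]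
    exact Finset.single_le_sum (fun y _ => hP0 y) (Finset.mem_univ x)
  -- coverage: sum over all buckets i ∈ range (t+1)
  have generic : ∀ (F : Finset (Fin n → Bool)) (c : ℝ), 0 ≤ c →
      (∀ x, x ∉ F → P x ≤ c) → 1 - (2:ℝ)^n * c ≤ ∑ x ∈ F, P x := by
    intro F c hc hFc
    have hsplit : ∑ x ∈ F, P x + ∑ x ∈ Fᶜ, P x = 1 := by
      rw [Finset.sum_add_sum_compl]; exact hP1
    have hb : ∑ x ∈ Fᶜ, P x ≤ (Fᶜ.card : ℝ) * c := by
      calc ∑ x ∈ Fᶜ, P x ≤ ∑ _x ∈ Fᶜ, c :=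
            Finset.sum_le_sum (fun x hx => hFc x (Finset.mem_compl.mp hx))
        _ = (Fᶜ.card : ℝ) * c := by rw [Finset.sum_const, nsmul_eq_mul]
    have hcard : (Fᶜ.card : ℝ) ≤ (2:ℝ)^n := by
      have h1 : Fᶜ.card ≤ Fintype.card (Fin n → Bool) := Finset.card_le_univ _
      have h2 : Fintype.card (Fin n → Bool) = 2^n := by simp
      rw [h2] at h1
      calc (Fᶜ.card : ℝ) ≤ ((2^n : ℕ) : ℝ) := by exact_mod_cast h1
        _ = (2:ℝ)^n := by push_cast; ring
    have : (Fᶜ.card : ℝ) * c ≤ (2:ℝ)^n * c := mul_le_mul_of_nonneg_right hcard hc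
    linarith
  have hcover : 1 - (2:ℝ) ^ (-(n:ℝ)) ≤ ∑ i ∈ Finset.range (t+1), h i := by
    have h2 : (2:ℝ)^n * (2:ℝ) ^ (-((t:ℝ)+1)*ε) ≤ (2:ℝ) ^ (-(n:ℝ)) := by
      have ha : (2:ℝ) ^ (-((t:ℝ)+1)*ε) ≤ (2:ℝ) ^ (-(2*(n:ℝ))) := by
        apply Real.rpow_le_rpow_of_exponent_le (by norm_num)
        nlinarith [htε]
      calc (2:ℝ)^n * (2:ℝ) ^ (-((t:ℝ)+1)*ε) ≤ (2:ℝ)^n * (2:ℝ) ^ (-(2*(n:ℝ))) := by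
            apply mul_le_mul_of_nonneg_left ha (by positivity)
        _ = (2:ℝ) ^ (-(n:ℝ)) := by
            rw [← Real.rpow_natCast (2:ℝ) n, ← Real.rpow_add (by norm_num)]
            ring_nf
    rw [← hsum]
    refine le_trans (by linarith : 1 - (2:ℝ) ^ (-(n:ℝ))
        ≤ 1 - (2:ℝ)^n * (2:ℝ) ^ (-((t:ℝ)+1)*ε))
      (generic _ ((2:ℝ) ^ (-((t:ℝ)+1)*ε)) (by positivity) ?_)
    intro x hx
    simp only [Finset.mem_filter, Finset.mem_univ, true_and] at hx
    push_neg at hx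
    have hx2 := hx
    by_contra hxc
    push_neg at hxc
    set pred : ℕ → Prop := fun i => P x ≤ (2:ℝ) ^ (-(i:ℝ)*ε) with hpred
    have h0 : pred 0 := by
      simp only [hpred]
      norm_num
      exact hPle1 x
    set i := Nat.findGreatest pred t with hi
    have hile : i ≤ t := Nat.findGreatest_le t
    have hispec : pred i := Nat.findGreatest_spec (Nat.zero_le t) h0
    have hnotsucc : ¬ pred (i+1) := by
      rcases lt_or_eq_of_le hile with hlt | heq
      · exact Nat.findGreatest_is_greatest (Nat.lt_succ_self _) hlt
      · rw [heq]
        simp only [hpred]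
        push_neg
        push_cast
        linarith [hxc]
    simp only [hpred] at hnotsucc hispec
    push_neg at hnotsucc
    push_cast at hnotsucc
    exact hx2 i (Finset.mem_range.mpr (Nat.lt_succ_of_le hile))
      ⟨by linarith [hnotsucc], hispec⟩
  -- sum of h over the complement of N inside range (t+1) is small
  have hbadN : ∑ i ∈ (Finset.range (t+1)).filter (fun i => ¬ ε/(2*(t:ℝ)) ≤ h i), h i ≤ ε := by
    calc ∑ i ∈ (Finset.range (t+1)).filter (fun i => ¬ ε/(2*(t:ℝ)) ≤ h i), h i
        ≤ ∑ _i ∈ (Finset.range (t+1)).filter (fun i => ¬ ε/(2*(t:ℝ)) ≤ h i), ε/(2*(t:ℝ)) := by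
          apply Finset.sum_le_sum
          intro i hi
          simp only [Finset.mem_filter] at hi
          linarith [hi.2, not_le.mp hi.2]
      _ = ((Finset.range (t+1)).filter (fun i => ¬ ε/(2*(t:ℝ)) ≤ h i)).card * (ε/(2*(t:ℝ))) := by
          rw [Finset.sum_const, nsmul_eq_mul]
      _ ≤ (t+1) * (ε/(2*(t:ℝ))) := by
          apply mul_le_mul_of_nonneg_right
          · have := Finset.card_filter_le (Finset.range (t+1)) (fun i => ¬ ε/(2*(t:ℝ)) ≤ h i)
            rw [Finset.card_range] at this
            exact_mod_cast this
          · positivity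
      _ ≤ (2*(t:ℝ)) * (ε/(2*(t:ℝ))) := by
          apply mul_le_mul_of_nonneg_right _ (by positivity)
          have : (1:ℝ) ≤ t := by exact_mod_cast ht1
          linarith
      _ = ε := by
          have htpos : (0:ℝ) < t := by exact_mod_cast ht1
          field_simp
  have hNsum : 1 - (2:ℝ) ^ (-(n:ℝ)) - ε ≤ ∑ i ∈ N, h i := by
    have hsplit := Finset.sum_filter_add_sum_filter_not (Finset.range (t+1))
      (fun i => ε/(2*(t:ℝ)) ≤ h i) h
    rw [hN]
    linarith [hcover, hbadN, hsplit]
  have hmain : 1 - (2:ℝ) ^ (-(n:ℝ)) - ε ≤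
      ∑ x ∈ Finset.univ.filter (fun x => ∃ i ∈ N, cond i x), P x := by
    rw [hsum N]; exact hNsum
  exact ⟨hmain, fun hεn => by linarith⟩
end
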